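/- Let E be a finite-dimensional complex vector space, let α : E → E be a linear map whose spectrum is contained in Σ₁, and let Ẽ ⊆ E be a linear subspace. Then α(Ẽ) ⊆ Ẽ if and only if exp(2πi·α)(Ẽ) ⊆ Ẽ. -/

import Mathlib

open Complex

noncomputable section

/-- The set Σ: complex numbers `α` with `-1 ≤ Re α ≤ 0`, `Im α ≥ 0` if `Re α = -1`,
and `Im α < 0` if `Re α = 0`. -/
def SigmaSet : Set ℂ :=
  {α : ℂ | -1 ≤ α.re ∧ α.re ≤ 0 ∧ (α.re = -1 → 0 ≤ α.im) ∧ (α.re = 0 → α.im < 0)}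

/-- The set Σ₁ := Σ + 1. -/
def Sigma1 : Set ℂ := {α : ℂ | α - 1 ∈ SigmaSet}

/-- The constant `2πi`. -/
def twoPiI : ℂ := 2 * Real.pi * Complex.I

/-- The exponential `exp(2πi·f)` of an endomorphism `f`. -/
def expEnd {E : Type*} [NormedAddCommGroup E] [NormedSpace ℂ E] (f : E →L[ℂ] E) :
    E →L[ℂ] E :=
  NormedSpace.exp (twoPiI • f)

/-- The power series `ψ(A) := ∑_{k=1}^∞ ((2πi)^k / k!) A^(k-1)`. It satisfies
`A·ψ(A) = ψ(A)·A = exp(2πi·A) − Id`. -/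
def psiEnd {E : Type*} [NormedAddCommGroup E] [NormedSpace ℂ E] (A : E →L[ℂ] E) :
    E →L[ℂ] E :=
  ∑' k : ℕ, ((twoPiI ^ (k + 1) / (Nat.factorial (k + 1) : ℂ)) • A ^ k)

/-! Invariance under `α` passes to `exp (2πi α)`, a limit of polynomials in `α`. Conversely, a
subspace invariant under `B = exp (2πi α)` is the sum of its intersections with the generalized
eigenspaces of `B`. As `z ↦ exp (2πi z)` is injective on Σ₁, each of these lies in a generalized
eigenspace of `α`, say for `l`. There `N = α - l` is nilpotent and
`B - exp (2πi l) = N p(N)` for a polynomial `p` with `p(0) = 2πi exp (2πi l) ≠ 0`, so `N`, hence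
`α`, is a polynomial in `B - exp (2πi l)` on that eigenspace. -/

open Polynomial Set Module

lemma Polynomial.commute_aeval_self {R A : Type*} [CommSemiring R] [Semiring A] [Algebra R A]
    (a : A) (p : R[X]) : Commute a (aeval a p) := by
  simpa using (Commute.all X p).map (aeval a)

section Nilpotent

variable {K V : Type*} [Field K] [AddCommGroup V] [Module K V] {N : End K V}
  {W : Submodule K V} {y : V}

lemma Module.End.pow_apply_aeval_mem {m : ℕ} (h : ∀ i, m ≤ i → (N ^ i) y ∈ W) (q : K[X]) :
    (N ^ m) (aeval N q y) ∈ W := by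
  rw [aeval_eq_sum_range, LinearMap.sum_apply, map_sum]
  refine W.sum_mem fun i _ => ?_
  rw [LinearMap.smul_apply, map_smul, ← End.mul_apply, ← pow_add]
  exact W.smul_mem _ (h _ (by omega))

/-- Since `(N * p N) ^ j = p(0) ^ j • N ^ j + N ^ (j + 1) * q N`, a downward induction on `j`
shows that every `N ^ j y` lies in `W`. -/
lemma Module.End.apply_mem_of_mapsTo_mul_aeval {p : K[X]} (hp : p.coeff 0 ≠ 0)
    (hW : MapsTo (N * aeval N p) W W) (hy : y ∈ W) {k : ℕ} (hk : (N ^ k) y = 0) :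
    N y ∈ W := by
  suffices ∀ d j, k ≤ j + d → (N ^ j) y ∈ W by simpa using this k 1 (by omega)
  intro d
  induction d with
  | zero =>
    intro j hj
    rw [End.pow_map_zero_of_le (by omega) hk]
    exact W.zero_mem
  | succ d ih =>
    intro j hj
    obtain ⟨q, hq⟩ : X ∣ p ^ j - C (p.coeff 0 ^ j) :=
      X_dvd_iff.2 (by simp [coeff_zero_eq_eval_zero])
    have hpow : (N * aeval N p) ^ j = p.coeff 0 ^ j • N ^ j + N ^ (j + 1) * aeval N q := by
      rw [(commute_aeval_self N p).mul_pow, ← map_pow,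
        sub_eq_iff_eq_add.1 hq]
      simp only [map_add, map_mul, aeval_X, aeval_C, Algebra.smul_def, mul_add, pow_succ,
        mul_assoc]
      rw [Algebra.commutes]
      abel
    have hMj : ((N * aeval N p) ^ j) y ∈ W := by
      rw [End.pow_apply]
      exact hW.iterate j hy
    have htail := End.pow_apply_aeval_mem (m := j + 1) (fun i hi => ih i (by omega)) q
    rw [hpow, LinearMap.add_apply, LinearMap.smul_apply, End.mul_apply] at hMj
    have := W.smul_mem (p.coeff 0 ^ j)⁻¹ ((W.add_mem_iff_left htail).1 hMj)
    rwa [smul_smul, inv_mul_cancel₀ (pow_ne_zero _ hp), one_smul] at this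

end Nilpotent

lemma Set.EqOn.iterate {α : Type*} {f g : α → α} {s : Set α} (h : EqOn f g s)
    (hf : MapsTo f s s) : ∀ n, EqOn f^[n] g^[n] s
  | 0 => fun _ _ => rfl
  | n + 1 => fun x hx => by
    rw [Function.iterate_succ_apply, Function.iterate_succ_apply, ← h hx]
    exact h.iterate hf n (hf hx)

theorem iSupIndep.exists_le_of_le_comp {α ι κ : Type*} [CompleteLattice α] [IsModularLattice α]
    [Nonempty ι] {U : κ → α} {V : ι → α} (hU : iSupIndep U) (hV : ⨆ i, V i = ⊤) {g : ι → κ}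
    (hg : InjOn g {i | V i ≠ ⊥}) (hle : ∀ i, V i ≤ U (g i)) (k : κ) : ∃ i, U k ≤ V i := by
  have hfiber : U k ≤ ⨆ (i) (_ : g i = k), V i := by
    have hA : ⨆ (i) (_ : g i = k), V i ≤ U k := iSup₂_le fun i hi => hi ▸ hle i
    have hR : Disjoint (U k) (⨆ (i) (_ : g i ≠ k), V i) :=
      (hU k).mono_right (iSup₂_le fun i hi => le_iSup₂_of_le (g i) hi (hle i))
    have htop : (⨆ (i) (_ : g i = k), V i) ⊔ ⨆ (i) (_ : g i ≠ k), V i = ⊤ := by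
      refine top_unique (hV ▸ iSup_le fun i => ?_)
      by_cases hi : g i = k
      · exact le_sup_of_le_left (le_iSup₂_of_le i hi le_rfl)
      · exact le_sup_of_le_right (le_iSup₂_of_le i hi le_rfl)
    refine le_of_eq ?_
    calc U k = ((⨆ (i) (_ : g i = k), V i) ⊔ ⨆ (i) (_ : g i ≠ k), V i) ⊓ U k := by
          rw [htop, top_inf_eq]
      _ = ⨆ (i) (_ : g i = k), V i := by
          rw [sup_inf_assoc_of_le _ hA, inf_comm, hR.eq_bot, sup_bot_eq]
  by_cases h : ∃ i, V i ≠ ⊥ ∧ g i = k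
  · obtain ⟨i₀, hi₀, rfl⟩ := h
    refine ⟨i₀, hfiber.trans (iSup₂_le fun i hi => ?_)⟩
    by_cases hbot : V i = ⊥
    · simp [hbot]
    · rw [hg hbot hi₀ hi]
  · simp only [not_exists, not_and] at h
    refine ⟨Classical.arbitrary ι, hfiber.trans (iSup₂_le fun i hi => ?_)⟩
    have : V i = ⊥ := by_contra fun hne => h i hne hi
    simp [this]

lemma twoPiI_ne_zero : twoPiI ≠ 0 := by
  simp [twoPiI, Real.pi_ne_zero, Complex.I_ne_zero]

lemma injOn_exp_twoPiI_mul_sigma1 : InjOn (fun z => Complex.exp (twoPiI * z)) Sigma1 := by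
  intro a ha b hb hab
  obtain ⟨n, hn⟩ := Complex.exp_eq_exp_iff_exists_int.1 hab
  have hab : a = b + n := mul_left_cancel₀ twoPiI_ne_zero (by rw [hn, twoPiI]; ring)
  have hre : a.re = b.re + n := by simp [hab]
  have him : a.im = b.im := by simp [hab]
  obtain ⟨ha₁, ha₂, ha₃, ha₄⟩ := ha
  obtain ⟨hb₁, hb₂, hb₃, hb₄⟩ := hb
  simp only [sub_re, one_re, sub_im, one_im, sub_zero] at ha₁ ha₂ ha₃ ha₄ hb₁ hb₂ hb₃ hb₄
  have hlt : (n : ℝ) < 1 := by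
    by_contra! h
    linarith [ha₄ (by linarith), hb₃ (by linarith)]
  have hgt : -1 < (n : ℝ) := by
    by_contra! h
    linarith [hb₄ (by linarith), ha₃ (by linarith)]
  have hn0 : n = 0 := by
    have : n < 1 := by exact_mod_cast hlt
    have : -1 < n := by exact_mod_cast hgt
    omega
  simp [hab, hn0]

lemma ContinuousLinearMap.mem_spectrum_of_maxGenEigenspace_ne_bot {𝕜 E : Type*}
    [NontriviallyNormedField 𝕜] [NormedAddCommGroup E] [NormedSpace 𝕜 E] [CompleteSpace E]
    {f : E →L[𝕜] E} {l : 𝕜} (h : End.maxGenEigenspace (f : End 𝕜 E) l ≠ ⊥) :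
    l ∈ spectrum 𝕜 f := by
  rw [ContinuousLinearMap.spectrum_eq]
  exact (End.HasUnifEigenvalue.lt zero_lt_one h).mem_spectrum

lemma NormedSpace.exp_eq_exp_smul_exp_sub_algebraMap {𝕂 A : Type*} [RCLike 𝕂] [NormedRing A]
    [NormedAlgebra 𝕂 A] [CompleteSpace A] (a : A) (z : 𝕂) :
    NormedSpace.exp a = NormedSpace.exp z • NormedSpace.exp (a - algebraMap 𝕂 A z) := by
  let +nondep : NormedAlgebra ℚ A := .restrictScalars ℚ 𝕂 A
  rw [Algebra.smul_def, algebraMap_exp_comm,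
    ← exp_add_of_commute (Algebra.commutes z (a - algebraMap 𝕂 A z)), add_sub_cancel]

section ExpApply

variable {𝕂 E : Type*} [RCLike 𝕂] [NormedAddCommGroup E] [NormedSpace 𝕂 E] [CompleteSpace E]

lemma NormedSpace.exp_apply_eq_sum_of_pow_apply_eq_zero (F : E →L[𝕂] E) {n : ℕ} {y : E}
    (hy : (F ^ n) y = 0) :
    NormedSpace.exp F y = ∑ m ∈ Finset.range n, ((m.factorial : 𝕂)⁻¹ • (F ^ m) y) := by
  have := (exp_series_hasSum_exp' (𝕂 := 𝕂) F).mapL (ContinuousLinearMap.apply 𝕂 E y)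
  refine this.tsum_eq.symm.trans (tsum_eq_sum fun m hm => ?_)
  rw [Finset.mem_range, not_lt] at hm
  have hy' : ((F : End 𝕂 E) ^ n) y = 0 := by
    rwa [← ContinuousLinearMap.toLinearMap_pow]
  have : (F ^ m) y = 0 := by
    rw [← ContinuousLinearMap.coe_coe, ContinuousLinearMap.toLinearMap_pow]
    exact End.pow_map_zero_of_le hm hy'
  simp [this]

lemma Submodule.mapsTo_exp_of_mapsTo (p : Submodule 𝕂 E) (hp : IsClosed (p : Set E))
    {F : E →L[𝕂] E} (hF : MapsTo F p p) : MapsTo (NormedSpace.exp F : E →L[𝕂] E) p p := by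
  intro x hx
  have := (NormedSpace.exp_series_hasSum_exp' (𝕂 := 𝕂) F).mapL (ContinuousLinearMap.apply 𝕂 E x)
  refine hp.mem_of_tendsto this (Filter.Eventually.of_forall fun s => p.sum_mem fun n _ => ?_)
  have hn : (F ^ n) x ∈ p := by
    rw [← ContinuousLinearMap.coe_coe, ContinuousLinearMap.toLinearMap_pow, End.pow_apply]
    exact hF.iterate n hx
  simpa using p.smul_mem (n.factorial : 𝕂)⁻¹ hn

end ExpApply

/-- The truncations of the series defining `psiEnd`. -/
noncomputable def psiPoly (n : ℕ) : ℂ[X] :=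
  ∑ m ∈ Finset.range n, C (twoPiI ^ (m + 1) / ((m + 1).factorial : ℂ)) * X ^ m

lemma psiPoly_coeff_zero (n : ℕ) : (psiPoly (n + 1)).coeff 0 = twoPiI := by
  simp [psiPoly]

section Eigenspaces

variable {E : Type*} [NormedAddCommGroup E] [NormedSpace ℂ E]

lemma commute_expEnd (α : E →L[ℂ] E) : Commute (α : End ℂ E) (expEnd α) :=
  (((Commute.refl α).smul_right twoPiI).exp_right).map ContinuousLinearMap.toLinearMapRingHom

lemma mapsTo_expEnd_sub_smul_genEigenspace (α : E →L[ℂ] E) (l μ : ℂ) (k : ℕ) :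
    MapsTo ⇑((expEnd α : End ℂ E) - μ • 1) (End.genEigenspace (α : End ℂ E) l k : Set E)
      (End.genEigenspace (α : End ℂ E) l k : Set E) :=
  End.mapsTo_genEigenspace_of_comm
    ((commute_expEnd α).sub_right ((Commute.one_right _).smul_right μ)) l k

variable [CompleteSpace E]

lemma eqOn_expEnd_sub_smul_genEigenspace (α : E →L[ℂ] E) (l : ℂ) (k : ℕ) :
    EqOn ⇑((expEnd α : End ℂ E) - Complex.exp (twoPiI * l) • 1)
      ⇑(((α : End ℂ E) - l • 1) *
        aeval ((α : End ℂ E) - l • 1) (C (Complex.exp (twoPiI * l)) * psiPoly k))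
      (End.genEigenspace (α : End ℂ E) l k : Set E) := by
  intro w hw
  rw [SetLike.mem_coe, End.mem_genEigenspace_nat, LinearMap.mem_ker] at hw
  set N : End ℂ E := (α : End ℂ E) - l • 1
  have hsplit : twoPiI • α - algebraMap ℂ (E →L[ℂ] E) (twoPiI * l) = twoPiI • (α - l • 1) := by
    rw [Algebra.algebraMap_eq_smul_one, smul_sub, smul_smul]
  have hpow : ∀ m, ((twoPiI • (α - l • 1)) ^ m) w = twoPiI ^ m • (N ^ m) w := fun m => by
    rw [_root_.smul_pow, smul_apply, ← ContinuousLinearMap.coe_coe,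
      ContinuousLinearMap.toLinearMap_pow, ContinuousLinearMap.toLinearMap_sub,
      ContinuousLinearMap.toLinearMap_smul, ContinuousLinearMap.toLinearMap_one]
  have hw' : ((twoPiI • (α - l • 1)) ^ (k + 1)) w = 0 := by
    rw [hpow, End.pow_map_zero_of_le k.le_succ hw, smul_zero]
  rw [LinearMap.sub_apply, LinearMap.smul_apply, End.one_apply, ContinuousLinearMap.coe_coe,
    expEnd, NormedSpace.exp_eq_exp_smul_exp_sub_algebraMap _ (twoPiI * l), hsplit, smul_apply,
    NormedSpace.exp_apply_eq_sum_of_pow_apply_eq_zero _ hw',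
    Finset.sum_range_succ', ← Complex.exp_eq_exp_ℂ]
  simp only [psiPoly, hpow, Finset.mul_sum, map_mul, map_sum, aeval_C, aeval_X_pow,
    LinearMap.sum_apply, End.mul_apply, Module.algebraMap_end_apply, map_smul, pow_zero,
    Nat.factorial_zero, Nat.cast_one, inv_one, one_smul, one_apply_eq_self,
    smul_add, Finset.smul_sum, smul_smul]
  rw [add_sub_cancel_right]
  refine Finset.sum_congr rfl fun m _ => ?_
  rw [pow_succ' N, End.mul_apply]
  congr 1
  ring

lemma maxGenEigenspace_le_maxGenEigenspace_expEnd (α : E →L[ℂ] E) (l : ℂ) :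
    End.maxGenEigenspace (α : End ℂ E) l ≤
      End.maxGenEigenspace (expEnd α : End ℂ E) (Complex.exp (twoPiI * l)) := by
  intro y hy
  obtain ⟨k, hk⟩ := (End.mem_maxGenEigenspace _ _ _).1 hy
  have hyk : y ∈ End.genEigenspace (α : End ℂ E) l k := by
    rwa [End.mem_genEigenspace_nat, LinearMap.mem_ker]
  set N : End ℂ E := (α : End ℂ E) - l • 1
  set P := aeval N (C (Complex.exp (twoPiI * l)) * psiPoly k)
  have hNP : Commute N P := commute_aeval_self N _
  refine (End.mem_maxGenEigenspace _ _ _).2 ⟨k, ?_⟩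
  rw [End.pow_apply, (eqOn_expEnd_sub_smul_genEigenspace α l k).iterate
    (mapsTo_expEnd_sub_smul_genEigenspace α l _ k) k hyk, ← End.pow_apply, hNP.mul_pow,
    (hNP.pow_pow k k).eq, End.mul_apply, hk, map_zero]

lemma apply_mem_of_mapsTo_expEnd {α : E →L[ℂ] E} {Et : Submodule ℂ E}
    (hEt : MapsTo (expEnd α) Et Et) {l : ℂ} {y : E} (hy : y ∈ Et)
    (hyl : y ∈ End.maxGenEigenspace (α : End ℂ E) l) : α y ∈ Et := by
  obtain ⟨k, hk⟩ := (End.mem_maxGenEigenspace _ _ _).1 hyl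
  set N : End ℂ E := (α : End ℂ E) - l • 1
  set G := End.genEigenspace (α : End ℂ E) l (k + 1 : ℕ)
  have hyG : y ∈ G := by
    rw [End.mem_genEigenspace_nat, LinearMap.mem_ker]
    exact End.pow_map_zero_of_le k.le_succ hk
  have hNy : N y ∈ Et ⊓ G := by
    refine End.apply_mem_of_mapsTo_mul_aeval
      (p := C (Complex.exp (twoPiI * l)) * psiPoly (k + 1)) ?_ ?_ ⟨hy, hyG⟩ hk
    · rw [coeff_C_mul, psiPoly_coeff_zero]
      exact mul_ne_zero (Complex.exp_ne_zero _) twoPiI_ne_zero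
    · rintro w ⟨hwE, hwG⟩
      rw [← eqOn_expEnd_sub_smul_genEigenspace α l (k + 1) hwG]
      exact ⟨Et.sub_mem (hEt hwE) (Et.smul_mem _ hwE),
        mapsTo_expEnd_sub_smul_genEigenspace α l _ (k + 1) hwG⟩
  have hαy : α y = N y + l • y := by simp [N]
  rw [hαy]
  exact Et.add_mem hNy.1 (Et.smul_mem _ hy)

lemma exists_maxGenEigenspace_expEnd_le [FiniteDimensional ℂ E] {α : E →L[ℂ] E}
    (hα : spectrum ℂ α ⊆ Sigma1) (μ : ℂ) :
    ∃ l, End.maxGenEigenspace (expEnd α : End ℂ E) μ ≤ End.maxGenEigenspace (α : End ℂ E) l :=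
  (End.independent_maxGenEigenspace _).exists_le_of_le_comp
    (End.iSup_maxGenEigenspace_eq_top _)
    (injOn_exp_twoPiI_mul_sigma1.mono fun _ hl =>
      hα (ContinuousLinearMap.mem_spectrum_of_maxGenEigenspace_ne_bot hl))
    (maxGenEigenspace_le_maxGenEigenspace_expEnd α) μ

end Eigenspaces

/-- A subspace `Ẽ` is preserved by `α` iff it is preserved by `exp(2πi·α)`,
provided the spectrum of `α` is contained in Σ₁. -/
theorem mapsTo_iff_expEnd_mapsTo
    {E : Type*} [NormedAddCommGroup E] [NormedSpace ℂ E] [FiniteDimensional ℂ E]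
    (α : E →L[ℂ] E) (hα : spectrum ℂ α ⊆ Sigma1) (Et : Submodule ℂ E) :
    (∀ x ∈ Et, α x ∈ Et) ↔ (∀ x ∈ Et, expEnd α x ∈ Et) := by
  have : CompleteSpace E := FiniteDimensional.complete ℂ E
  refine ⟨fun h => Et.mapsTo_exp_of_mapsTo Et.closed_of_finiteDimensional
    fun x hx => Et.smul_mem twoPiI (h x hx), fun h x hx => ?_⟩
  have hdecomp : Et = ⨆ μ, Et ⊓ End.maxGenEigenspace (expEnd α : End ℂ E) μ :=
    Et.eq_iSup_inf_genEigenspace ⊤ h (End.iSup_maxGenEigenspace_eq_top _)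
  rw [hdecomp] at hx
  refine (iSup_le fun μ => ?_ : _ ≤ Et.comap (α : End ℂ E)) hx
  obtain ⟨l, hl⟩ := exists_maxGenEigenspace_expEnd_le hα μ
  rintro y ⟨hyE, hyB⟩
  exact apply_mem_of_mapsTo_expEnd h hyE (hl hyB)
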